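/- Let (Ω, F, μ) be a probability space and let U, W, ε_M, ε_T, ε_Y be square-integrable real random variables, each with mean 0 and variance 1, with all pairwise covariances among {U, W, ε_M, ε_T, ε_Y} equal to 0. Let a, b, c, d, e, f be real numbers with b² + c² ≤ 1, a² + e² + 2abe ≤ 1, and d² + f² + 2cdf ≤ 1. Define M := b·U + c·W + √(1−b²−c²)·ε_M, T := a·U + e·M + √(1−a²−e²−2abe)·ε_T, and Y := d·W + f·M + √(1−d²−f²−2cdf)·ε_Y. If 1 − (ab + e)² ≠ 0, then the adjusted regression coefficient of T satisfies β_T = −abcd / (1 − (ab + e)²). -/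

import Mathlib

open MeasureTheory ProbabilityTheory

/-- Covariance of two real random variables: `Cov(X,Y) = E[XY] - E[X] E[Y]`. -/
noncomputable def covar {Ω : Type*} [MeasurableSpace Ω] (μ : Measure Ω) (X Y : Ω → ℝ) : ℝ :=
  (∫ ω, X ω * Y ω ∂μ) - (∫ ω, X ω ∂μ) * (∫ ω, Y ω ∂μ)

/-- The population OLS coefficient on `T` when regressing `Y` on `(T, M)`. -/
noncomputable def betaT {Ω : Type*} [MeasurableSpace Ω] (μ : Measure Ω) (Y T M : Ω → ℝ) : ℝ :=
  (covar μ Y T * variance M μ - covar μ Y M * covar μ M T) /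
    (variance T μ * variance M μ - (covar μ M T) ^ 2)

/-!
The covariance is bilinear on `L²`, and `M`, `T`, `Y` are linear combinations of the
orthonormal family `U, W, ε_M, ε_T, ε_Y`, so every covariance entering `β_T` is a dot product
of coefficient vectors. The constraints on the parameters make `Var M = Var T = 1`, and
the two terms of the numerator cancel except for the path `T ← U → M ← W → Y`, which
contributes `-abcd`.
-/

section

variable {Ω : Type*} [MeasurableSpace Ω] {μ : Measure Ω}

lemma covar_comm (X Y : Ω → ℝ) : covar μ X Y = covar μ Y X := by
  simp only [covar, mul_comm (X _)]
  ring

lemma covar_eq_covariance [IsProbabilityMeasure μ] {X Y : Ω → ℝ}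
    (hX : MemLp X 2 μ) (hY : MemLp Y 2 μ) : covar μ X Y = cov[X, Y; μ] :=
  (covariance_eq_sub hX hY).symm

lemma betaT_eq_covariance [IsProbabilityMeasure μ] {Y T M : Ω → ℝ}
    (hY : MemLp Y 2 μ) (hT : MemLp T 2 μ) (hM : MemLp M 2 μ) :
    betaT μ Y T M = (cov[Y, T; μ] * cov[M, M; μ] - cov[Y, M; μ] * cov[M, T; μ]) /
      (cov[T, T; μ] * cov[M, M; μ] - cov[M, T; μ] ^ 2) := by
  rw [betaT, covar_eq_covariance hY hT, covar_eq_covariance hY hM, covar_eq_covariance hM hT,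
    covariance_self hM.aemeasurable, covariance_self hT.aemeasurable]

lemma covariance_fun_sum_fun_sum_of_orthonormal [IsFiniteMeasure μ] {ι : Type*} [Fintype ι]
    [DecidableEq ι] {X : ι → Ω → ℝ} (hX : ∀ i, MemLp (X i) 2 μ)
    (horth : ∀ i j, cov[X i, X j; μ] = if i = j then 1 else 0) (p q : ι → ℝ) :
    cov[fun ω ↦ ∑ i, p i * X i ω, fun ω ↦ ∑ i, q i * X i ω; μ] = p ⬝ᵥ q := by
  rw [covariance_fun_sum_fun_sum (fun i ↦ (hX i).const_mul (p i))
    (fun j ↦ (hX j).const_mul (q j))]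
  simp only [covariance_const_mul_left, covariance_const_mul_right, horth, mul_ite, mul_one,
    mul_zero, Finset.sum_ite_eq, Finset.mem_univ, if_true]
  exact Finset.sum_congr rfl fun i _ ↦ mul_comm _ _

lemma betaT_of_orthonormal [IsProbabilityMeasure μ] {ι : Type*} [Fintype ι]
    [DecidableEq ι] {X : ι → Ω → ℝ} (hX : ∀ i, MemLp (X i) 2 μ)
    (horth : ∀ i j, cov[X i, X j; μ] = if i = j then 1 else 0) (y t m : ι → ℝ) :
    betaT μ (fun ω ↦ ∑ i, y i * X i ω) (fun ω ↦ ∑ i, t i * X i ω) (fun ω ↦ ∑ i, m i * X i ω)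
      = (y ⬝ᵥ t * m ⬝ᵥ m - y ⬝ᵥ m * m ⬝ᵥ t) / (t ⬝ᵥ t * m ⬝ᵥ m - (m ⬝ᵥ t) ^ 2) := by
  have hL2 (p : ι → ℝ) : MemLp (fun ω ↦ ∑ i, p i * X i ω) 2 μ :=
    memLp_finsetSum _ fun i _ ↦ (hX i).const_mul _
  simp only [betaT_eq_covariance (hL2 y) (hL2 t) (hL2 m),
    covariance_fun_sum_fun_sum_of_orthonormal hX horth]

end

theorem stmt8_general {Ω : Type*} [MeasurableSpace Ω] (μ : Measure Ω) [IsProbabilityMeasure μ]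
    (U W εM εT εY : Ω → ℝ)
    (hU2 : MemLp U 2 μ) (hW2 : MemLp W 2 μ) (hεM2 : MemLp εM 2 μ)
    (hεT2 : MemLp εT 2 μ) (hεY2 : MemLp εY 2 μ)
    (hUv : variance U μ = 1) (hWv : variance W μ = 1) (hεMv : variance εM μ = 1)
    (hεTv : variance εT μ = 1) (hεYv : variance εY μ = 1)
    (hUW : covar μ U W = 0)
    (hUεM : covar μ U εM = 0) (hUεT : covar μ U εT = 0) (hUεY : covar μ U εY = 0)
    (hWεM : covar μ W εM = 0) (hWεT : covar μ W εT = 0) (hWεY : covar μ W εY = 0)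
    (hεMεT : covar μ εM εT = 0) (hεMεY : covar μ εM εY = 0) (hεTεY : covar μ εT εY = 0)
    (a b c d e f : ℝ)
    (hbc : b ^ 2 + c ^ 2 ≤ 1)
    (hae : a ^ 2 + e ^ 2 + 2 * a * b * e ≤ 1)
    (M T Y : Ω → ℝ)
    (hM : M = fun ω => b * U ω + c * W ω + Real.sqrt (1 - b ^ 2 - c ^ 2) * εM ω)
    (hT : T = fun ω => a * U ω + e * M ω +
      Real.sqrt (1 - a ^ 2 - e ^ 2 - 2 * a * b * e) * εT ω)
    (hY : Y = fun ω => d * W ω + f * M ω +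
      Real.sqrt (1 - d ^ 2 - f ^ 2 - 2 * c * d * f) * εY ω) :
    betaT μ Y T M = -(a * b * c * d) / (1 - (a * b + e) ^ 2) := by
  set g := Real.sqrt (1 - b ^ 2 - c ^ 2)
  set s := Real.sqrt (1 - a ^ 2 - e ^ 2 - 2 * a * b * e)
  set r := Real.sqrt (1 - d ^ 2 - f ^ 2 - 2 * c * d * f)
  set X : Fin 5 → Ω → ℝ := ![U, W, εM, εT, εY]
  have hX : ∀ i, MemLp (X i) 2 μ := by
    intro i; fin_cases i <;> assumption
  have horth : ∀ i j, cov[X i, X j; μ] = if i = j then 1 else 0 := by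
    intro i j
    rcases eq_or_ne i j with rfl | hij
    · rw [covariance_self (hX i).aemeasurable, if_pos rfl]
      fin_cases i <;> assumption
    · rw [if_neg hij, ← covar_eq_covariance (hX i) (hX j)]
      fin_cases i <;> fin_cases j <;> first
        | exact absurd rfl hij | assumption | (rw [covar_comm]; assumption)
  have hMX : M = fun ω ↦ ∑ i, ![b, c, g, 0, 0] i * X i ω := by
    funext ω; simp [hM, X, Fin.sum_univ_five]
  have hTX : T = fun ω ↦ ∑ i, ![a + e * b, e * c, e * g, s, 0] i * X i ω := by
    funext ω; simp [hT, hM, X, Fin.sum_univ_five]; ring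
  have hYX : Y = fun ω ↦ ∑ i, ![f * b, d + f * c, f * g, 0, r] i * X i ω := by
    funext ω; simp [hY, hM, X, Fin.sum_univ_five]; ring
  have hg : g ^ 2 = 1 - b ^ 2 - c ^ 2 := Real.sq_sqrt (by linarith)
  have hs : s ^ 2 = 1 - a ^ 2 - e ^ 2 - 2 * a * b * e := Real.sq_sqrt (by linarith)
  rw [hYX, hTX, hMX, betaT_of_orthonormal hX horth]
  simp only [dotProduct, Fin.sum_univ_five, Matrix.cons_val_zero, Matrix.cons_val_one,
    Matrix.cons_val_two, Matrix.cons_val_three, Matrix.cons_val_four, Matrix.head_cons,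
    Matrix.tail_cons]
  congr 1
  · ring
  · linear_combination (a ^ 2 + s ^ 2) * hg + hs

/-- Bias of the adjusted estimator in the Butterfly-structure:
`β_T = −abcd / (1 − (ab + e)²)`. -/
theorem stmt8 {Ω : Type*} [MeasurableSpace Ω] (μ : Measure Ω) [IsProbabilityMeasure μ]
    (U W εM εT εY : Ω → ℝ)
    (hU2 : MemLp U 2 μ) (hW2 : MemLp W 2 μ) (hεM2 : MemLp εM 2 μ)
    (hεT2 : MemLp εT 2 μ) (hεY2 : MemLp εY 2 μ)
    (hUm : ∫ ω, U ω ∂μ = 0) (hWm : ∫ ω, W ω ∂μ = 0) (hεMm : ∫ ω, εM ω ∂μ = 0)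
    (hεTm : ∫ ω, εT ω ∂μ = 0) (hεYm : ∫ ω, εY ω ∂μ = 0)
    (hUv : variance U μ = 1) (hWv : variance W μ = 1) (hεMv : variance εM μ = 1)
    (hεTv : variance εT μ = 1) (hεYv : variance εY μ = 1)
    (hUW : covar μ U W = 0)
    (hUεM : covar μ U εM = 0) (hUεT : covar μ U εT = 0) (hUεY : covar μ U εY = 0)
    (hWεM : covar μ W εM = 0) (hWεT : covar μ W εT = 0) (hWεY : covar μ W εY = 0)
    (hεMεT : covar μ εM εT = 0) (hεMεY : covar μ εM εY = 0) (hεTεY : covar μ εT εY = 0)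
    (a b c d e f : ℝ)
    (hbc : b ^ 2 + c ^ 2 ≤ 1)
    (hae : a ^ 2 + e ^ 2 + 2 * a * b * e ≤ 1)
    (hdf : d ^ 2 + f ^ 2 + 2 * c * d * f ≤ 1)
    (M T Y : Ω → ℝ)
    (hM : M = fun ω => b * U ω + c * W ω + Real.sqrt (1 - b ^ 2 - c ^ 2) * εM ω)
    (hT : T = fun ω => a * U ω + e * M ω +
      Real.sqrt (1 - a ^ 2 - e ^ 2 - 2 * a * b * e) * εT ω)
    (hY : Y = fun ω => d * W ω + f * M ω +
      Real.sqrt (1 - d ^ 2 - f ^ 2 - 2 * c * d * f) * εY ω)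
    (hne : 1 - (a * b + e) ^ 2 ≠ 0) :
    betaT μ Y T M = -(a * b * c * d) / (1 - (a * b + e) ^ 2) :=
  stmt8_general μ U W εM εT εY hU2 hW2 hεM2 hεT2 hεY2 hUv hWv hεMv hεTv hεYv hUW hUεM hUεT hUεY hWεM
    hWεT hWεY hεMεT hεMεY hεTεY a b c d e f hbc hae M T Y hM hT hY
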